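/- Let X be a real Banach space and suppose T : c₀ → X is an isomorphism onto its range, i.e., T is linear and there are constants with ‖T z‖ ≤ ‖T‖·‖z‖ and ‖z‖ ≤ ‖T⁻¹‖·‖T z‖ for all z ∈ c₀. Let A := T(B_{c₀}), the image of the closed unit ball of c₀. Then for every 0 < ε < 1 and every N ∈ ℕ one has δ_N(A) ≥ (1 − ε)/‖T⁻¹‖. -/

import Mathlib

open Set Metric Bornology

variable {X : Type*} [NormedAddCommGroup X] [NormedSpace ℝ X] [CompleteSpace X]

/-- The set `(A - x) ∩ (x - A) = {d | x + d ∈ A ∧ x - d ∈ A}`. -/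
def symmAt (A : Set X) (x : X) : Set X := {d | x + d ∈ A ∧ x - d ∈ A}

/-- The symmetrized set of `A` with respect to a family of points:
`⋂ i, (A - x i) ∩ (x i - A)`. -/
def symmSet {ι : Type*} (A : Set X) (x : ι → X) : Set X := ⋂ i, symmAt A (x i)

/-- `Δ_N(A)`: the family of all symmetrized sets of `A` with respect to `N` points of `A`. -/
def DeltaFam (A : Set X) (N : ℕ) : Set (Set X) :=
  {D | ∃ x : Fin N → X, (∀ n, x n ∈ A) ∧ D = symmSet A x}

/-- `δ₀(A) = diam(A)/2`. -/
noncomputable def delta0 (A : Set X) : ℝ := diam A / 2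

/-- `δ_N(A) = inf{δ₀(D) : D ∈ Δ_N(A)}`. -/
noncomputable def deltaN (A : Set X) (N : ℕ) : ℝ := sInf (delta0 '' DeltaFam A N)

/-- `δ_∞(A) = lim_N δ_N(A)`, which equals the infimum since the sequence is
decreasing and bounded below. -/
noncomputable def deltaInf (A : Set X) : ℝ := ⨅ N : ℕ, deltaN A (N + 1)

open scoped ZeroAtInfty

/-- `X` contains an isomorphic copy of `c₀`: a continuous linear map `T : c₀ → X` which is
bounded below (hence an isomorphism onto its range). -/
def ContainsC0 (X : Type*) [NormedAddCommGroup X] [NormedSpace ℝ X] : Prop :=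
  ∃ T : C₀(ℕ, ℝ) →L[ℝ] X, ∃ a : ℝ, 0 < a ∧ ∀ z : C₀(ℕ, ℝ), a * ‖z‖ ≤ ‖T z‖


/-!
Let `x₁, …, x_N` be points of `A = T(B_{c₀})`, say `xₙ = T zₙ` with `‖zₙ‖ ≤ 1`. Since finitely many
sequences tend to `0`, there is a coordinate `k` at which every `zₙ` has modulus at most `ε`. Then
`w = (1 - ε) e_k` satisfies `‖zₙ ± w‖ ≤ 1`, so `T w` lies in the symmetrized set `D`. As `D` is
symmetric, `±T w ∈ D` gives `diam D ≥ 2‖T w‖ ≥ 2‖w‖ / c = 2(1 - ε) / c`.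
-/

section SymmetrizedSet

variable {E Y : Type*} [NormedAddCommGroup E] [NormedAddCommGroup Y] {ι : Type*}

theorem mem_symmSet {A : Set E} {x : ι → E} {d : E} :
    d ∈ symmSet A x ↔ ∀ i, x i + d ∈ A ∧ x i - d ∈ A := by
  simp [symmSet, symmAt]

theorem neg_mem_symmSet {A : Set E} {x : ι → E} {d : E} (hd : d ∈ symmSet A x) :
    -d ∈ symmSet A x := by
  rw [mem_symmSet] at hd ⊢
  exact fun i ↦ by simpa [sub_eq_add_neg, and_comm] using hd i

theorem isBounded_symmSet [Nonempty ι] {A : Set E} (hA : IsBounded A) (x : ι → E) :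
    IsBounded (symmSet A x) := by
  obtain ⟨C, hC⟩ := hA.exists_norm_le
  obtain ⟨i⟩ := ‹Nonempty ι›
  refine isBounded_iff_forall_norm_le.2 ⟨C + ‖x i‖, fun d hd ↦ ?_⟩
  calc ‖d‖ = ‖(x i + d) - x i‖ := by rw [add_sub_cancel_left]
    _ ≤ ‖x i + d‖ + ‖x i‖ := norm_sub_le _ _
    _ ≤ C + ‖x i‖ := by gcongr; exact hC _ (mem_symmSet.1 hd i).1

theorem norm_le_delta0 [NormedSpace ℝ E] {S : Set E} (hS : IsBounded S) {d : E} (hd : d ∈ S) (hnd : -d ∈ S) :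
    ‖d‖ ≤ delta0 S := by
  have h := dist_le_diam_of_mem hS hd hnd
  rw [dist_eq_norm, sub_neg_eq_add, ← two_smul ℝ d, norm_smul, Real.norm_two] at h
  rw [delta0]
  linarith

theorem le_deltaN {A : Set E} (hA : A.Nonempty) {N : ℕ} {r : ℝ}
    (h : ∀ x : Fin N → E, (∀ n, x n ∈ A) → r ≤ delta0 (symmSet A x)) : r ≤ deltaN A N := by
  obtain ⟨a, ha⟩ := hA
  refine le_csInf ⟨_, _, ⟨fun _ ↦ a, fun _ ↦ ha, rfl⟩, rfl⟩ ?_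
  rintro _ ⟨_, ⟨x, hx, rfl⟩, rfl⟩
  exact h x hx

theorem mapsTo_symmSet {F : Type*} [FunLike F E Y] [AddMonoidHomClass F E Y] (f : F)
    (B : Set E) (z : ι → E) : MapsTo f (symmSet B z) (symmSet (f '' B) (f ∘ z)) := by
  intro d hd
  rw [mem_symmSet] at hd ⊢
  exact fun i ↦ ⟨⟨_, (hd i).1, map_add f _ _⟩, ⟨_, (hd i).2, map_sub f _ _⟩⟩

end SymmetrizedSet

namespace ZeroAtInftyContinuousMap

variable {α β : Type*} [TopologicalSpace α] [SeminormedAddCommGroup β]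

theorem norm_apply_le (f : C₀(α, β)) (a : α) : ‖f a‖ ≤ ‖f‖ := by
  rw [← norm_toBCF_eq_norm]
  exact f.toBCF.norm_coe_le_norm a

theorem norm_le_of_forall {f : C₀(α, β)} {C : ℝ} (hC : 0 ≤ C) (h : ∀ a, ‖f a‖ ≤ C) :
    ‖f‖ ≤ C := by
  rw [← norm_toBCF_eq_norm]
  exact (BoundedContinuousFunction.norm_le hC).2 h

theorem exists_forall_norm_apply_le [NoncompactSpace α] {ι : Type*} [Finite ι]
    (f : ι → C₀(α, β)) {ε : ℝ} (hε : 0 < ε) : ∃ a, ∀ i, ‖f i a‖ ≤ ε := by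
  have h : ∀ᶠ a in Filter.cocompact α, ∀ i, ‖f i a‖ ≤ ε :=
    Filter.eventually_all.2 fun i ↦ ((zero_at_infty (f i)).eventually
      (closedBall_mem_nhds 0 hε)).mono fun _ ↦ mem_closedBall_zero_iff.1
  exact h.exists

theorem norm_add_le_of_forall_ne_eq_zero {f g : C₀(α, β)} {a : α} {C : ℝ}
    (hg : ∀ b, b ≠ a → g b = 0) (hf : ‖f‖ ≤ C) (ha : ‖f a‖ + ‖g a‖ ≤ C) : ‖f + g‖ ≤ C := by
  refine norm_le_of_forall ((norm_nonneg f).trans hf) fun b ↦ ?_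
  rw [add_apply]
  rcases eq_or_ne b a with rfl | hb
  · exact (norm_add_le _ _).trans ha
  · rw [hg b hb, add_zero]
    exact (norm_apply_le f b).trans hf

variable [DiscreteTopology α] [DecidableEq α]

def single (a : α) (b : β) : C₀(α, β) where
  toFun := Pi.single a b
  continuous_toFun := continuous_of_discreteTopology
  zero_at_infty' := by
    rw [Filter.cocompact_eq_cofinite]
    refine tendsto_const_nhds.congr' ?_
    filter_upwards [Filter.eventually_cofinite_ne a] with c hc
    rw [Pi.single_eq_of_ne hc]

theorem single_apply (a : α) (b : β) (c : α) : single a b c = (Pi.single a b : α → β) c := rfl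

theorem norm_single (a : α) (b : β) : ‖single a b‖ = ‖b‖ := by
  refine le_antisymm (norm_le_of_forall (norm_nonneg b) fun c ↦ ?_) ?_
  · rw [single_apply, Pi.single_apply]
    split_ifs <;> simp
  · simpa [single_apply] using norm_apply_le (single a b) a

end ZeroAtInftyContinuousMap

open ZeroAtInftyContinuousMap in
theorem single_mem_symmSet_closedBall {ι : Type*} {z : ι → C₀(ℕ, ℝ)} (hz : ∀ i, ‖z i‖ ≤ 1)
    {k : ℕ} {ε : ℝ} (hε : ε ≤ 1) (hk : ∀ i, ‖z i k‖ ≤ ε) :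
    single k (1 - ε) ∈ symmSet (closedBall 0 1) z := by
  have hsupp : ∀ m, m ≠ k → single k (1 - ε) m = 0 := fun m hm ↦ Pi.single_eq_of_ne hm _
  have hk_single : ∀ i, ‖z i k‖ + ‖single k (1 - ε) k‖ ≤ 1 := fun i ↦ by
    rw [single_apply, Pi.single_eq_same, Real.norm_of_nonneg (sub_nonneg.2 hε)]
    linarith [hk i]
  refine mem_symmSet.2 fun i ↦ ⟨?_, ?_⟩ <;> rw [mem_closedBall_zero_iff]
  · exact norm_add_le_of_forall_ne_eq_zero hsupp (hz i) (hk_single i)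
  · rw [sub_eq_add_neg]
    refine norm_add_le_of_forall_ne_eq_zero (a := k) (fun m hm ↦ ?_) (hz i) ?_
    · rw [ZeroAtInftyContinuousMap.neg_apply, hsupp m hm, neg_zero]
    · simpa only [ZeroAtInftyContinuousMap.neg_apply, norm_neg] using hk_single i

/-- if `T : c₀ → X` is an isomorphism onto its range, with `‖z‖ ≤ c·‖T z‖`
(so `c` plays the role of `‖T⁻¹‖`), and `A = T(B_{c₀})`, then `δ_N(A) ≥ (1 - ε)/c` for every
`0 < ε < 1` and every `N`. -/
theorem stmt8 (T : C₀(ℕ, ℝ) →L[ℝ] X) (c : ℝ) (hc : 0 < c)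
    (hT : ∀ z : C₀(ℕ, ℝ), ‖z‖ ≤ c * ‖T z‖)
    (ε : ℝ) (hε0 : 0 < ε) (hε1 : ε < 1) (N : ℕ) (hN : 0 < N) :
    (1 - ε) / c ≤ deltaN (T '' closedBall 0 1) N := by
  have : Nonempty (Fin N) := ⟨⟨0, hN⟩⟩
  have hA : IsBounded (T '' closedBall 0 1) := T.lipschitz.isBounded_image isBounded_closedBall
  refine le_deltaN ⟨T 0, mem_image_of_mem T (mem_closedBall_self zero_le_one)⟩ fun x hx ↦ ?_
  choose z hz hTz using hx
  obtain ⟨k, hk⟩ := ZeroAtInftyContinuousMap.exists_forall_norm_apply_le z hε0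
  set w := ZeroAtInftyContinuousMap.single k (1 - ε)
  have hw : w ∈ symmSet (closedBall 0 1) z :=
    single_mem_symmSet_closedBall (fun i ↦ mem_closedBall_zero_iff.1 (hz i)) hε1.le hk
  have hTw : T w ∈ symmSet (T '' closedBall 0 1) x := by
    simpa only [Function.comp_def, hTz] using mapsTo_symmSet T _ z hw
  calc (1 - ε) / c = ‖w‖ / c := by
        rw [ZeroAtInftyContinuousMap.norm_single, Real.norm_of_nonneg (by linarith)]
    _ ≤ ‖T w‖ := (div_le_iff₀' hc).2 (hT w)
    _ ≤ delta0 (symmSet (T '' closedBall 0 1) x) :=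
        norm_le_delta0 (isBounded_symmSet hA x) hTw (neg_mem_symmSet hTw)
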